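/- Let F : T → c(M) with V⁺(F,T) < +∞, and let t ∈ T be a left limit point of T (i.e., T ∩ (t−ε,t) ≠ ∅ for every ε > 0). Then v⁺(t) = v⁺(t−0) + limsup_{T ∋ s → t−0} e(F(s),F(t)), where v⁺(t) := V⁺(F, T∩(-∞,t]) and v⁺(t−0) is its left limit along T. -/

import Mathlib

open Set Metric EMetric Filter
open scoped ENNReal Pointwise

noncomputable def exc {M : Type*} [MetricSpace M] (X Y : Set M) : ℝ≥0∞ :=
  ⨆ x ∈ X, EMetric.infEdist x Y

noncomputable def varBy {M : Type*} [MetricSpace M]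
    (D : Set M → Set M → ℝ≥0∞) (F : ℝ → Set M) (T : Set ℝ) : ℝ≥0∞ :=
  ⨆ p : {p : ℕ × (ℕ → ℝ) // Monotone p.2 ∧ ∀ i, p.2 i ∈ T},
    ∑ i ∈ Finset.range p.1.1, D (F (p.1.2 i)) (F (p.1.2 (i + 1)))

noncomputable def varPlus {M : Type*} [MetricSpace M] (F : ℝ → Set M) (T : Set ℝ) : ℝ≥0∞ :=
  varBy exc F T

noncomputable def varMinus {M : Type*} [MetricSpace M] (F : ℝ → Set M) (T : Set ℝ) : ℝ≥0∞ :=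
  varBy (fun X Y => exc Y X) F T

noncomputable def varH {M : Type*} [MetricSpace M] (F : ℝ → Set M) (T : Set ℝ) : ℝ≥0∞ :=
  varBy EMetric.hausdorffEdist F T

/-!
For `s < t` in `T`, appending the step from `s` to `t` to a partition of `T ∩ Iic s` yields a
partition of `T ∩ Iic t`, so `v⁺(s) + e(F s, F t) ≤ v⁺(t)`; taking limsups in both terms gives `≥`.
Conversely, a partition of `T ∩ Iic t` may be truncated at any `s ∈ T` lying between its last
point below `t` and `t` (replace each point `p` by `min p s`); since `e(X, X) = 0` and `e` satisfies
the triangle inequality, this loses at most `e(F s, F t)`. Hence every partition sum is eventually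
`≤ v⁺(s) + e(F s, F t)` as `s → t - 0`, which gives `≤`.
-/

open Topology

lemma exc_self {M : Type*} [MetricSpace M] (X : Set M) : exc X X = 0 :=
  nonpos_iff_eq_zero.1 <| iSup₂_le fun _ hx => (infEDist_zero_of_mem hx).le

lemma infEDist_le_infEDist_add_exc {M : Type*} [MetricSpace M] (x : M) (Y Z : Set M) :
    infEDist x Z ≤ infEDist x Y + exc Y Z := by
  simp_rw [infEDist, ENNReal.iInf_add]
  exact le_iInf₂ fun y hy => infEDist_le_edist_add_infEDist.trans <|
    add_le_add_right (le_iSup₂ (f := fun y _ => infEDist y Z) y hy) _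

lemma exc_triangle {M : Type*} [MetricSpace M] (X Y Z : Set M) :
    exc X Z ≤ exc X Y + exc Y Z :=
  iSup₂_le fun x hx => (infEDist_le_infEDist_add_exc x Y Z).trans <|
    add_le_add_left (le_iSup₂ (f := fun x _ => infEDist x Y) x hx) _

theorem Finset.sum_range_add_le_sum_range_add {α : Type*} [AddCommMonoid α] [PartialOrder α]
    [IsOrderedAddMonoid α] {x y a : ℕ → α} {m : ℕ} (h : ∀ i < m, x i + a i ≤ y i + a (i + 1)) :
    ∑ i ∈ Finset.range m, x i + a 0 ≤ ∑ i ∈ Finset.range m, y i + a m := by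
  induction m with
  | zero => simp
  | succ m ih =>
    calc ∑ i ∈ Finset.range (m + 1), x i + a 0 = (∑ i ∈ Finset.range m, x i + a 0) + x m := by
          rw [Finset.sum_range_succ]; abel
      _ ≤ (∑ i ∈ Finset.range m, y i + a m) + x m :=
          add_le_add (ih fun i hi => h i (by omega)) le_rfl
      _ = ∑ i ∈ Finset.range m, y i + (x m + a m) := by abel
      _ ≤ ∑ i ∈ Finset.range m, y i + (y m + a (m + 1)) := add_le_add le_rfl (h m (by omega))
      _ = ∑ i ∈ Finset.range (m + 1), y i + a (m + 1) := by rw [Finset.sum_range_succ]; abel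

theorem Monotone.le_limsup_nhdsWithin {α β : Type*} [LinearOrder α] [TopologicalSpace α]
    [OrderTopology α] [CompleteLattice β] {v : α → β} (hv : Monotone v) {S : Set α} {s t : α}
    [(𝓝[S] t).NeBot] (hst : s < t) : v s ≤ limsup v (𝓝[S] t) :=
  le_limsup_of_frequently_le' <|
    ((eventually_gt_nhds hst).filter_mono nhdsWithin_le_nhds).frequently.mono fun _ h => hv h.le

theorem nhdsWithin_inter_Iio_neBot {T : Set ℝ} {t : ℝ}
    (h : ∀ ε > 0, (T ∩ Ioo (t - ε) t).Nonempty) : (𝓝[T ∩ Iio t] t).NeBot := by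
  refine mem_closure_iff_nhdsWithin_neBot.1 (Metric.mem_closure_iff.2 fun ε hε => ?_)
  obtain ⟨s, hsT, hts, hst⟩ := h ε hε
  exact ⟨s, ⟨hsT, hst⟩, by rw [Real.dist_eq, abs_lt]; constructor <;> linarith⟩

def appendAfter (f : ℕ → ℝ) (m : ℕ) (u : ℝ) : ℕ → ℝ := fun i => if i ≤ m then f i else u

section appendAfter

variable {f : ℕ → ℝ} {m : ℕ} {u : ℝ}

theorem monotone_appendAfter (hf : Monotone f) (hfu : f m ≤ u) : Monotone (appendAfter f m u) := by
  refine monotone_nat_of_le_succ fun i => ?_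
  unfold appendAfter
  split_ifs with h₁ h₂ h₂
  · exact hf i.le_succ
  · exact (hf h₁).trans hfu
  · omega
  · exact le_rfl

theorem appendAfter_mem {T : Set ℝ} (hf : ∀ i, f i ∈ T) (hu : u ∈ T) (i : ℕ) :
    appendAfter f m u i ∈ T := by
  unfold appendAfter; split_ifs <;> simp_all

theorem appendAfter_succ : appendAfter f m u (m + 1) = u := by simp [appendAfter]

theorem sum_range_succ_appendAfter {β : Type*} [AddCommMonoid β] (φ : ℝ → ℝ → β) :
    ∑ i ∈ Finset.range (m + 1), φ (appendAfter f m u i) (appendAfter f m u (i + 1)) =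
      ∑ i ∈ Finset.range m, φ (f i) (f (i + 1)) + φ (f m) u := by
  rw [Finset.sum_range_succ, appendAfter_succ]
  congr 1
  · refine Finset.sum_congr rfl fun i hi => ?_
    have hi : i < m := Finset.mem_range.1 hi
    simp [appendAfter, hi.le, Nat.succ_le_of_lt hi]
  · simp [appendAfter]

end appendAfter

section varBy

variable {M : Type*} [MetricSpace M] {D : Set M → Set M → ℝ≥0∞} {F : ℝ → Set M} {T : Set ℝ}

theorem varBy_mono {T' : Set ℝ} (h : T ⊆ T') : varBy D F T ≤ varBy D F T' :=
  iSup_le fun p => le_iSup_of_le ⟨p.1, p.2.1, fun i => h (p.2.2 i)⟩ le_rfl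

theorem sum_le_varBy {f : ℕ → ℝ} (hf : Monotone f) (hT : ∀ i, f i ∈ T) (m : ℕ) :
    ∑ i ∈ Finset.range m, D (F (f i)) (F (f (i + 1))) ≤ varBy D F T :=
  le_iSup_of_le (⟨(m, f), hf, hT⟩ : {p : ℕ × (ℕ → ℝ) // Monotone p.2 ∧ ∀ i, p.2 i ∈ T}) le_rfl

theorem sum_add_le_varBy {f : ℕ → ℝ} {m : ℕ} {u : ℝ} (hf : Monotone f) (hT : ∀ i, f i ∈ T)
    (hu : u ∈ T) (hfu : f m ≤ u) :
    ∑ i ∈ Finset.range m, D (F (f i)) (F (f (i + 1))) + D (F (f m)) (F u) ≤ varBy D F T := by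
  rw [← sum_range_succ_appendAfter (fun a b => D (F a) (F b))]
  exact sum_le_varBy (monotone_appendAfter hf hfu) (appendAfter_mem hT hu) _

theorem varBy_Iic_add_le {s s' : ℝ} (hs : s ∈ T) (hs' : s' ∈ T) (hss' : s ≤ s') :
    varBy D F (T ∩ Iic s) + D (F s) (F s') ≤ varBy D F (T ∩ Iic s') := by
  have : Nonempty {p : ℕ × (ℕ → ℝ) // Monotone p.2 ∧ ∀ i, p.2 i ∈ T ∩ Iic s} :=
    ⟨⟨(0, fun _ => s), monotone_const, fun _ => ⟨hs, self_mem_Iic⟩⟩⟩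
  rw [varBy, ENNReal.iSup_add]
  refine iSup_le fun ⟨⟨m, f⟩, hf, hfT⟩ => ?_
  have hfT' : ∀ i, f i ∈ T ∩ Iic s' := fun i => ⟨(hfT i).1, (hfT i).2.trans hss'⟩
  calc ∑ i ∈ Finset.range m, D (F (f i)) (F (f (i + 1))) + D (F s) (F s')
      ≤ ∑ i ∈ Finset.range m, D (F (f i)) (F (f (i + 1))) + D (F (f m)) (F s) + D (F s) (F s') :=
        add_le_add le_self_add le_rfl
    _ = ∑ i ∈ Finset.range (m + 1),
          D (F (appendAfter f m s i)) (F (appendAfter f m s (i + 1))) +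
          D (F (appendAfter f m s (m + 1))) (F s') := by
        rw [sum_range_succ_appendAfter (fun a b => D (F a) (F b)), appendAfter_succ]
    _ ≤ varBy D F (T ∩ Iic s') :=
        sum_add_le_varBy (monotone_appendAfter hf (hfT m).2) (appendAfter_mem hfT' ⟨hs, hss'⟩)
          ⟨hs', self_mem_Iic⟩ (by rwa [appendAfter_succ])

theorem monotone_varBy_Iic : Monotone fun s => varBy D F (T ∩ Iic s) :=
  fun _ _ h => varBy_mono (inter_subset_inter_right _ (Iic_subset_Iic.2 h))

theorem sum_le_varBy_Iic_add (hD₀ : ∀ X, D X X = 0) (hD : ∀ X Y Z, D X Z ≤ D X Y + D Y Z)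
    {f : ℕ → ℝ} {m : ℕ} {s t : ℝ} (hf : Monotone f) (hfT : ∀ i, f i ∈ T ∩ Iic t) (hs : s ∈ T)
    (hst : s < t) (hgap : ∀ i ≤ m, f i < t → f i ≤ s) :
    ∑ i ∈ Finset.range m, D (F (f i)) (F (f (i + 1))) ≤ varBy D F (T ∩ Iic s) + D (F s) (F t) := by
  set g : ℕ → ℝ := fun i => min (f i) s
  have hcases : ∀ i ≤ m, (f i ≤ s ∧ g i = f i) ∨ (f i = t ∧ g i = s) := by
    intro i hi
    by_cases h : f i < t
    · exact Or.inl ⟨hgap i hi h, min_eq_left (hgap i hi h)⟩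
    · have hfi : f i = t := le_antisymm (hfT i).2 (not_lt.1 h)
      exact Or.inr ⟨hfi, min_eq_right (hfi ▸ hst.le)⟩
  -- telescope with the defect `D (F (g i)) (F (f i))`: it is `0` while `f i < t` and
  -- `D (F s) (F t)` once the partition has reached `t`
  have hstep : ∀ i < m, D (F (f i)) (F (f (i + 1))) + D (F (g i)) (F (f i)) ≤
      D (F (g i)) (F (g (i + 1))) + D (F (g (i + 1))) (F (f (i + 1))) := by
    intro i hi
    rcases hcases i hi.le with ⟨hfi, hgi⟩ | ⟨hfi, hgi⟩ <;>
      rcases hcases (i + 1) hi with ⟨hfj, hgj⟩ | ⟨hfj, hgj⟩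
    · rw [hgi, hgj, hD₀, hD₀]
    · rw [hgi, hgj, hfj, hD₀, add_zero]
      exact hD _ _ _
    · exact absurd (hfi ▸ hf i.le_succ) (not_le.2 (hfj.trans_lt hst))
    · rw [hgi, hgj, hfi, hfj, hD₀, hD₀, zero_add]
  have hend : D (F (g m)) (F (f m)) ≤ D (F s) (F t) := by
    rcases hcases m le_rfl with ⟨-, hgm⟩ | ⟨hfm, hgm⟩
    · rw [hgm, hD₀]
      exact zero_le
    · rw [hgm, hfm]
  have hgT : ∀ i, g i ∈ T ∩ Iic s := fun i =>
    ⟨by rcases min_choice (f i) s with h | h <;> simp only [g, h, hs, (hfT i).1],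
      mem_Iic.2 (min_le_right _ _)⟩
  calc ∑ i ∈ Finset.range m, D (F (f i)) (F (f (i + 1)))
      ≤ ∑ i ∈ Finset.range m, D (F (f i)) (F (f (i + 1))) + D (F (g 0)) (F (f 0)) := le_self_add
    _ ≤ ∑ i ∈ Finset.range m, D (F (g i)) (F (g (i + 1))) + D (F (g m)) (F (f m)) :=
        Finset.sum_range_add_le_sum_range_add hstep
    _ ≤ varBy D F (T ∩ Iic s) + D (F s) (F t) :=
        add_le_add (sum_le_varBy (hf.min monotone_const) hgT m) hend

variable {t : ℝ} [(𝓝[T ∩ Iio t] t).NeBot]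

theorem varBy_Iic_le_limsup_add (hD₀ : ∀ X, D X X = 0) (hD : ∀ X Y Z, D X Z ≤ D X Y + D Y Z) :
    varBy D F (T ∩ Iic t) ≤ limsup (fun s => varBy D F (T ∩ Iic s)) (𝓝[T ∩ Iio t] t) +
      limsup (fun s => D (F s) (F t)) (𝓝[T ∩ Iio t] t) := by
  refine iSup_le fun ⟨⟨m, f⟩, hf, hfT⟩ => ?_
  have hgap : ∀ᶠ s in 𝓝[T ∩ Iio t] t, ∀ i ∈ Finset.range (m + 1), f i < t → f i ≤ s := by
    refine (Finset.eventually_all _).2 fun i _ => nhdsWithin_le_nhds ?_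
    by_cases h : f i < t
    · exact (eventually_gt_nhds h).mono fun _ hs _ => hs.le
    · exact Eventually.of_forall fun _ h' => absurd h' h
  have hsum : ∀ᶠ s in 𝓝[T ∩ Iio t] t, ∑ i ∈ Finset.range m, D (F (f i)) (F (f (i + 1))) ≤
      limsup (fun s => varBy D F (T ∩ Iic s)) (𝓝[T ∩ Iio t] t) + D (F s) (F t) := by
    filter_upwards [self_mem_nhdsWithin, hgap] with s ⟨hsT, hst⟩ hs
    refine (sum_le_varBy_Iic_add hD₀ hD hf hfT hsT hst fun i hi => hs i ?_).trans ?_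
    · exact Finset.mem_range.2 (Nat.lt_succ_of_le hi)
    · exact add_le_add (monotone_varBy_Iic.le_limsup_nhdsWithin hst) le_rfl
  refine (le_limsup_of_frequently_le' hsum.frequently).trans_eq ?_
  exact limsup_const_add _ _ _ (by isBoundedDefault) (by isBoundedDefault)

theorem limsup_add_limsup_le_varBy_Iic (ht : t ∈ T) :
    limsup (fun s => varBy D F (T ∩ Iic s)) (𝓝[T ∩ Iio t] t) +
      limsup (fun s => D (F s) (F t)) (𝓝[T ∩ Iio t] t) ≤ varBy D F (T ∩ Iic t) := by
  have h : ∀ s' ∈ T ∩ Iio t,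
      varBy D F (T ∩ Iic s') + limsup (fun s => D (F s) (F t)) (𝓝[T ∩ Iio t] t) ≤
        varBy D F (T ∩ Iic t) := by
    rintro s' ⟨-, hs't⟩
    rw [← limsup_const_add _ _ _ (by isBoundedDefault) (by isBoundedDefault)]
    refine limsup_le_of_le (by isBoundedDefault) ?_
    filter_upwards [self_mem_nhdsWithin,
      (eventually_gt_nhds hs't).filter_mono nhdsWithin_le_nhds] with s ⟨hsT, hst⟩ hs's
    exact (add_le_add (monotone_varBy_Iic hs's.le) le_rfl).trans (varBy_Iic_add_le hsT ht hst.le)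
  rw [← limsup_add_const _ _ _ (by isBoundedDefault) (by isBoundedDefault)]
  exact limsup_le_of_le (by isBoundedDefault) (eventually_mem_nhdsWithin.mono h)

end varBy

theorem varPlus_left_jump_general {M : Type*} [MetricSpace M]
    (T : Set ℝ) (F : ℝ → Set M)
    (t : ℝ) (ht : t ∈ T)
    (hleft : ∀ ε > 0, (T ∩ Set.Ioo (t - ε) t).Nonempty) :
    varPlus F (T ∩ Set.Iic t) =
      Filter.limsup (fun s => varPlus F (T ∩ Set.Iic s)) (nhdsWithin t (T ∩ Set.Iio t)) +
      Filter.limsup (fun s => exc (F s) (F t)) (nhdsWithin t (T ∩ Set.Iio t)) :=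
  have := nhdsWithin_inter_Iio_neBot hleft
  le_antisymm (varBy_Iic_le_limsup_add exc_self exc_triangle) (limsup_add_limsup_le_varBy_Iic ht)

/-- Left jump formula: v⁺(t) = v⁺(t−0) + limsup_{T ∋ s → t−0} e(F(s),F(t)). -/
theorem varPlus_left_jump {M : Type*} [MetricSpace M]
    (T : Set ℝ) (F : ℝ → Set M)
    (hF : ∀ t ∈ T, (F t).Nonempty ∧ IsCompact (F t))
    (hV : varPlus F T < ⊤) (t : ℝ) (ht : t ∈ T)
    (hleft : ∀ ε > 0, (T ∩ Set.Ioo (t - ε) t).Nonempty) :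
    varPlus F (T ∩ Set.Iic t) =
      Filter.limsup (fun s => varPlus F (T ∩ Set.Iic s)) (nhdsWithin t (T ∩ Set.Iio t)) +
      Filter.limsup (fun s => exc (F s) (F t)) (nhdsWithin t (T ∩ Set.Iio t)) :=
  varPlus_left_jump_general T F t ht hleft
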